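/- Let U be a U-generator (E[e^{U_j}] = 1 for all j ∈ D, 0 < E[e^{max_j U_j}] < ∞) with density f_U with respect to ν, let T be the associated T-generator, and Y = T − max_j T_j + E the associated mgp random vector. Fix j ∈ D and let Q^{(j)} be a random vector in [−∞,∞)^d whose law has density t ↦ e^{t_j} f_U(t) with respect to ν (this is a probability density since E[e^{U_j}] = 1; in particular Q^{(j)}_j > −∞ almost surely). Then P[Y_j > 0] > 0 and the law of the coordinatewise exponential exp(Q^{(j)} − Q^{(j)}_j) equals the conditional law of exp(Y − Y_j) given Y_j > 0. -/

import Mathlib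

open MeasureTheory ProbabilityTheory
open scoped Classical

/-- `e^x` for `x ∈ [-∞,∞)`, with `e^{-∞} = 0`. -/
noncomputable def eexp (x : EReal) : ℝ := if x = ⊥ then 0 else Real.exp x.toReal

/-- The embedding `ι_J : ℝ^J → [-∞,∞)^d`. -/
noncomputable def embJ {d : ℕ} (J : Finset (Fin d)) (x : {j // j ∈ J} → ℝ) :
    Fin d → EReal :=
  fun j => if h : j ∈ J then ((x ⟨j, h⟩ : ℝ) : EReal) else ⊥

/-- The dominating measure `ν` on `[-∞,∞)^d`. -/
noncomputable def nuMeasure (d : ℕ) : Measure (Fin d → EReal) :=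
  ∑ J ∈ Finset.univ.filter (fun J : Finset (Fin d) => J.Nonempty),
    Measure.map (embJ J) (Measure.pi fun _ : {j // j ∈ J} => (volume : Measure ℝ))


open scoped ENNReal NNReal
open Set Real

section AuxLemmas


lemma measurable_eexp : Measurable eexp := by
  unfold eexp
  exact Measurable.ite (MeasurableSet.singleton ⊥) measurable_const
    (Real.measurable_exp.comp measurable_ereal_toReal)

lemma eexp_nonneg (x : EReal) : 0 ≤ eexp x := by
  unfold eexp; split_ifs
  · exact le_refl 0
  · exact Real.exp_nonneg _

lemma eexp_bot : eexp ⊥ = 0 := if_pos rfl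

lemma eexp_coe (r : ℝ) : eexp (r : EReal) = Real.exp r := by
  unfold eexp; rw [if_neg (EReal.coe_ne_bot r), EReal.toReal_coe]

lemma eexp_ne_bot {x : EReal} (hx : x ≠ ⊥) : eexp x = Real.exp x.toReal := if_neg hx

lemma eexp_le {x y : EReal} (h : x ≤ y) (hy : y ≠ ⊤) : eexp x ≤ eexp y := by
  rcases eq_or_ne x ⊥ with hx | hx
  · rw [hx, eexp_bot]; exact eexp_nonneg y
  · have hyb : y ≠ ⊥ := fun hb => hx (le_bot_iff.mp (hb ▸ h))
    rw [eexp_ne_bot hx, eexp_ne_bot hyb]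
    exact Real.exp_le_exp.mpr (EReal.toReal_le_toReal h hx hy)


/-- Generic sandwich lemma: if `m1` is dominated above by `c • μ` on sets where `e ≤ c`,
and `m2` dominated below by `c • μ` on sets where `c ≤ e`, then `m1 ≤ m2` on measurable sets. -/
lemma meas_le_of_sandwich {α : Type*} [MeasurableSpace α] (m1 m2 μ : Measure α)
    [IsFiniteMeasure μ] (e : α → ℝ≥0∞) (he : Measurable e) (hefin : ∀ x, e x ≠ ⊤)
    (h1 : ∀ S : Set α, MeasurableSet S → ∀ c : ℝ≥0∞, c ≠ ⊤ → (∀ x ∈ S, e x ≤ c) →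
      m1 S ≤ c * μ S)
    (h2 : ∀ S : Set α, MeasurableSet S → ∀ c : ℝ≥0∞, (∀ x ∈ S, c ≤ e x) →
      c * μ S ≤ m2 S)
    {B : Set α} (hB : MeasurableSet B) : m1 B ≤ m2 B := by
  refine ENNReal.le_of_forall_pos_le_add fun δ hδ _ => ?_
  -- choose partition width ε
  set M : ℝ≥0 := (μ Set.univ).toNNReal + 1 with hM
  have hM0 : M ≠ 0 := by positivity
  set ε : ℝ≥0 := δ / M with hε
  have hε0 : 0 < ε := by positivity
  have hμuniv : μ Set.univ = ((μ Set.univ).toNNReal : ℝ≥0∞) :=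
    (ENNReal.coe_toNNReal (measure_ne_top μ _)).symm
  have hεμ : (ε : ℝ≥0∞) * μ B ≤ (δ : ℝ≥0∞) := by
    calc (ε : ℝ≥0∞) * μ B ≤ (ε : ℝ≥0∞) * ((μ Set.univ).toNNReal : ℝ≥0∞) := by
          refine mul_le_mul_right ?_ _
          rw [← hμuniv]; exact measure_mono (subset_univ B)
      _ = ((ε * (μ Set.univ).toNNReal : ℝ≥0) : ℝ≥0∞) := by rw [ENNReal.coe_mul]
      _ ≤ (δ : ℝ≥0∞) := by
          rw [ENNReal.coe_le_coe, hε]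
          calc δ / M * (μ Set.univ).toNNReal ≤ δ / M * M := by
                refine mul_le_mul_right ?_ _
                rw [hM]; exact le_add_of_nonneg_right zero_le_one
            _ = δ := div_mul_cancel₀ δ hM0
  -- the partition
  set E : ℕ → Set α := fun k => e ⁻¹' (Ico ((k : ℝ≥0) * ε : ℝ≥0) (((k : ℝ≥0) * ε + ε : ℝ≥0))) with hE
  have hEmeas : ∀ k, MeasurableSet (E k) := fun k => he measurableSet_Ico
  have hEdisj : Pairwise (Function.onFun Disjoint fun k => B ∩ E k) := by
    intro k l hkl
    wlog h : k < l generalizing k l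
    · exact (this hkl.symm (lt_of_le_of_ne (not_lt.mp h) (Ne.symm hkl))).symm
    refine Set.disjoint_left.mpr fun x hx hx' => ?_
    have h1 : e x < ((k : ℝ≥0) * ε + ε : ℝ≥0) := hx.2.2
    have h2 : ((l : ℝ≥0) * ε : ℝ≥0∞) ≤ e x := hx'.2.1
    have : ((k : ℝ≥0) * ε + ε : ℝ≥0) ≤ ((l : ℝ≥0) * ε : ℝ≥0) := by
      have : ((k : ℝ≥0) + 1) * ε ≤ (l : ℝ≥0) * ε := by
        refine mul_le_mul_left ?_ ε
        have : (k : ℝ≥0) + 1 ≤ (l : ℝ≥0) := by exact_mod_cast Nat.succ_le_of_lt h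
        exact this
      calc ((k : ℝ≥0) * ε + ε : ℝ≥0) = ((k : ℝ≥0) + 1) * ε := by ring
        _ ≤ (l : ℝ≥0) * ε := this
    exact absurd (lt_of_lt_of_le h1 (by exact_mod_cast this)) (not_lt.mpr h2)
  have hEcover : B = ⋃ k, B ∩ E k := by
    ext x
    simp only [mem_iUnion, mem_inter_iff]
    constructor
    · intro hx
      obtain ⟨r, hr⟩ : ∃ r : ℝ≥0, e x = r := ⟨(e x).toNNReal, (ENNReal.coe_toNNReal (hefin x)).symm⟩
      refine ⟨⌊r / ε⌋₊, hx, ?_⟩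
      constructor
      · rw [hr, ENNReal.coe_le_coe]
        calc ((⌊r / ε⌋₊ : ℝ≥0)) * ε ≤ (r / ε) * ε := by
              refine mul_le_mul_left ?_ ε
              exact_mod_cast Nat.floor_le (zero_le : (0 : ℝ≥0) ≤ r / ε)
          _ = r := div_mul_cancel₀ r hε0.ne'
      · rw [hr, ENNReal.coe_lt_coe]
        have h1 : r / ε < (⌊r / ε⌋₊ : ℝ≥0) + 1 := Nat.lt_floor_add_one _
        calc r = (r / ε) * ε := (div_mul_cancel₀ r hε0.ne').symm
          _ < ((⌊r / ε⌋₊ : ℝ≥0) + 1) * ε := by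
              refine mul_lt_mul_of_pos_right h1 hε0
          _ = (⌊r / ε⌋₊ : ℝ≥0) * ε + ε := by ring
    · rintro ⟨k, hx, _⟩; exact hx
  -- sum up
  have key : ∀ k, m1 (B ∩ E k) ≤ m2 (B ∩ E k) + (ε : ℝ≥0∞) * μ (B ∩ E k) := by
    intro k
    have hSm : MeasurableSet (B ∩ E k) := hB.inter (hEmeas k)
    have hub : m1 (B ∩ E k) ≤ (((k : ℝ≥0) * ε + ε : ℝ≥0) : ℝ≥0∞) * μ (B ∩ E k) := by
      refine h1 _ hSm _ ENNReal.coe_ne_top fun x hx => le_of_lt hx.2.2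
    have hlb : (((k : ℝ≥0) * ε : ℝ≥0) : ℝ≥0∞) * μ (B ∩ E k) ≤ m2 (B ∩ E k) :=
      h2 _ hSm _ fun x hx => hx.2.1
    calc m1 (B ∩ E k) ≤ (((k : ℝ≥0) * ε + ε : ℝ≥0) : ℝ≥0∞) * μ (B ∩ E k) := hub
      _ = (((k : ℝ≥0) * ε : ℝ≥0) : ℝ≥0∞) * μ (B ∩ E k) + (ε : ℝ≥0∞) * μ (B ∩ E k) := by
          rw [ENNReal.coe_add, add_mul]
      _ ≤ m2 (B ∩ E k) + (ε : ℝ≥0∞) * μ (B ∩ E k) := add_le_add_left hlb _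
  calc m1 B = ∑' k, m1 (B ∩ E k) := by
        rw [hEcover, measure_iUnion hEdisj fun k => hB.inter (hEmeas k)]; rw [← hEcover]
    _ ≤ ∑' k, (m2 (B ∩ E k) + (ε : ℝ≥0∞) * μ (B ∩ E k)) := ENNReal.tsum_le_tsum key
    _ = ∑' k, m2 (B ∩ E k) + (ε : ℝ≥0∞) * ∑' k, μ (B ∩ E k) := by
        rw [ENNReal.tsum_add, ENNReal.tsum_mul_left]
    _ = m2 B + (ε : ℝ≥0∞) * μ B := by
        rw [hEcover, measure_iUnion hEdisj fun k => hB.inter (hEmeas k),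
          measure_iUnion hEdisj fun k => hB.inter (hEmeas k)]
        rw [← hEcover]
    _ ≤ m2 B + (δ : ℝ≥0∞) := add_le_add_right hεμ _


/-- For an arbitrary (possibly non-measurable) density `f` whose `withDensity` measure is
finite, multiplying by a finite measurable function commutes with `withDensity`. -/
lemma withDensity_mul_of_measurable {α : Type*} [MeasurableSpace α] (ν : Measure α)
    (f : α → ℝ≥0∞) [hfin : IsFiniteMeasure (ν.withDensity f)]
    {e : α → ℝ≥0∞} (he : Measurable e) (hefin : ∀ x, e x ≠ ⊤) :
    ν.withDensity (fun x => e x * f x) = (ν.withDensity f).withDensity e := by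
  have hub : ∀ S : Set α, MeasurableSet S → ∀ c : ℝ≥0∞, c ≠ ⊤ → (∀ x ∈ S, e x ≤ c) →
      ν.withDensity (fun x => e x * f x) S ≤ c * (ν.withDensity f) S := by
    intro S hS c hc hbound
    rw [withDensity_apply _ hS, withDensity_apply _ hS]
    calc ∫⁻ x in S, e x * f x ∂ν ≤ ∫⁻ x in S, c * f x ∂ν := by
          refine lintegral_mono_ae ?_
          filter_upwards [ae_restrict_mem hS] with x hx
          exact mul_le_mul_left (hbound x hx) _
      _ = c * ∫⁻ x in S, f x ∂ν := lintegral_const_mul' c f hc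
  have hlb : ∀ S : Set α, MeasurableSet S → ∀ c : ℝ≥0∞, (∀ x ∈ S, c ≤ e x) →
      c * (ν.withDensity f) S ≤ ν.withDensity (fun x => e x * f x) S := by
    intro S hS c hbound
    rw [withDensity_apply _ hS, withDensity_apply _ hS]
    rcases eq_or_ne c ⊤ with rfl | hc
    · -- c = ⊤ : then e x = ⊤ on S contradicts hefin unless S empty... handle
      rcases eq_empty_or_nonempty S with rfl | ⟨x, hx⟩
      · simp
      · exact absurd (top_le_iff.mp (hbound x hx)) (hefin x)
    calc c * ∫⁻ x in S, f x ∂ν = ∫⁻ x in S, c * f x ∂ν := (lintegral_const_mul' c f hc).symm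
      _ ≤ ∫⁻ x in S, e x * f x ∂ν := by
          refine lintegral_mono_ae ?_
          filter_upwards [ae_restrict_mem hS] with x hx
          exact mul_le_mul_left (hbound x hx) _
  have hub2 : ∀ S : Set α, MeasurableSet S → ∀ c : ℝ≥0∞, c ≠ ⊤ → (∀ x ∈ S, e x ≤ c) →
      (ν.withDensity f).withDensity e S ≤ c * (ν.withDensity f) S := by
    intro S hS c hc hbound
    rw [withDensity_apply _ hS]
    calc ∫⁻ x in S, e x ∂(ν.withDensity f) ≤ ∫⁻ _ in S, c ∂(ν.withDensity f) := by
          refine lintegral_mono_ae ?_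
          filter_upwards [ae_restrict_mem hS] with x hx
          exact hbound x hx
      _ = c * (ν.withDensity f) S := by rw [setLIntegral_const, mul_comm]
  have hlb2 : ∀ S : Set α, MeasurableSet S → ∀ c : ℝ≥0∞, (∀ x ∈ S, c ≤ e x) →
      c * (ν.withDensity f) S ≤ (ν.withDensity f).withDensity e S := by
    intro S hS c hbound
    rw [withDensity_apply e hS]
    calc c * (ν.withDensity f) S = ∫⁻ _ in S, c ∂(ν.withDensity f) := by
          rw [setLIntegral_const, mul_comm]
      _ ≤ ∫⁻ x in S, e x ∂(ν.withDensity f) := by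
          refine lintegral_mono_ae ?_
          filter_upwards [ae_restrict_mem hS] with x hx
          exact hbound x hx
  ext B hB
  exact le_antisymm
    (meas_le_of_sandwich _ _ (ν.withDensity f) e he hefin hub hlb2 hB)
    (meas_le_of_sandwich _ _ (ν.withDensity f) e he hefin hub2 hlb hB)


lemma expMeasure_Ioi {a : ℝ} (ha : 0 ≤ a) :
    expMeasure 1 (Ioi a) = ENNReal.ofReal (Real.exp (-a)) := by
  rw [expMeasure, gammaMeasure, withDensity_apply _ measurableSet_Ioi]
  have h1 : ∫⁻ x in Ioi a, gammaPDF 1 1 x = ∫⁻ x in Ioi a, ENNReal.ofReal (Real.exp (-x)) := by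
    refine setLIntegral_congr_fun measurableSet_Ioi (fun x hx => ?_)
    have hx0 : 0 < x := lt_of_le_of_lt ha hx
    rw [gammaPDF_of_nonneg hx0.le]
    norm_num
  rw [h1]
  rw [← ofReal_integral_eq_lintegral_ofReal]
  · rw [integral_exp_neg_Ioi]
  · have := exp_neg_integrableOn_Ioi a (zero_lt_one (α := ℝ))
    simpa [IntegrableOn] using this
  · exact ae_of_all _ fun x => (Real.exp_pos _).le


noncomputable def gapER {d : ℕ} (j : Fin d) (t : Fin d → EReal) : ℝ :=
  (⨆ i, t i).toReal - (t j).toReal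

lemma sup_ne_top' {d : ℕ} [NeZero d] {t : Fin d → EReal} (h : ∀ i, t i ≠ ⊤) :
    (⨆ i, t i) ≠ ⊤ := by
  obtain ⟨i, hi⟩ := exists_eq_ciSup_of_finite (f := t)
  rw [← hi]; exact h i

lemma sup_ne_bot' {d : ℕ} [NeZero d] {t : Fin d → EReal} {j : Fin d} (h : t j ≠ ⊥) :
    (⨆ i, t i) ≠ ⊥ := by
  intro hb
  exact h (le_bot_iff.mp (hb ▸ le_iSup t j))

lemma gap_nonneg {d : ℕ} [NeZero d] {j : Fin d} {t : Fin d → EReal}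
    (ht : ∀ i, t i ≠ ⊤) (htj : t j ≠ ⊥) : 0 ≤ gapER j t :=
  sub_nonneg.mpr (EReal.toReal_le_toReal (le_iSup t j) htj (sup_ne_top' ht))

lemma pos_sub_sup_add_iff {d : ℕ} [NeZero d] {j : Fin d} {t : Fin d → EReal}
    (ht : ∀ i, t i ≠ ⊤) (e : ℝ) :
    (0 < t j - (⨆ i, t i) + (e : EReal)) ↔ (t j ≠ ⊥ ∧ gapER j t < e) := by
  by_cases htj : t j = ⊥
  · rw [htj, EReal.bot_sub, EReal.bot_add]
    exact iff_of_false (not_lt_bot) (by simp [htj])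
  · obtain ⟨a, ha⟩ : ∃ a : ℝ, t j = (a : EReal) :=
      ⟨(t j).toReal, (EReal.coe_toReal (ht j) htj).symm⟩
    obtain ⟨b, hb⟩ : ∃ b : ℝ, (⨆ i, t i) = (b : EReal) :=
      ⟨(⨆ i, t i).toReal, (EReal.coe_toReal (sup_ne_top' ht) (sup_ne_bot' htj)).symm⟩
    unfold gapER
    rw [ha, hb, ← EReal.coe_sub, ← EReal.coe_add, EReal.coe_pos, EReal.toReal_coe,
      EReal.toReal_coe]
    simp only [ne_eq, EReal.coe_ne_bot, not_false_eq_true, true_and]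
    constructor <;> intro h <;> linarith

lemma eexp_div_eq {d : ℕ} [NeZero d] {j : Fin d} {t : Fin d → EReal}
    (ht : ∀ i, t i ≠ ⊤) (htj : t j ≠ ⊥) (e : ℝ) (i : Fin d) :
    eexp (t i - (⨆ k, t k) + (e : EReal)) / eexp (t j - (⨆ k, t k) + (e : EReal)) =
      eexp (t i) / eexp (t j) := by
  obtain ⟨b, hb⟩ : ∃ b : ℝ, (⨆ k, t k) = (b : EReal) :=
    ⟨(⨆ k, t k).toReal, (EReal.coe_toReal (sup_ne_top' ht) (sup_ne_bot' htj)).symm⟩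
  obtain ⟨a, ha⟩ : ∃ a : ℝ, t j = (a : EReal) :=
    ⟨(t j).toReal, (EReal.coe_toReal (ht j) htj).symm⟩
  by_cases hti : t i = ⊥
  · rw [hti, EReal.bot_sub, EReal.bot_add, eexp_bot, zero_div, zero_div]
  · obtain ⟨x, hx⟩ : ∃ x : ℝ, t i = (x : EReal) :=
      ⟨(t i).toReal, (EReal.coe_toReal (ht i) hti).symm⟩
    rw [ha, hb, hx, ← EReal.coe_sub, ← EReal.coe_add, ← EReal.coe_sub, ← EReal.coe_add,
      eexp_coe, eexp_coe, eexp_coe, eexp_coe, ← Real.exp_sub, ← Real.exp_sub]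
    congr 1; ring

lemma esup_mul_exp_neg_gap {d : ℕ} [NeZero d] {j : Fin d} {t : Fin d → EReal}
    (ht : ∀ i, t i ≠ ⊤) (htj : t j ≠ ⊥) :
    ENNReal.ofReal (eexp (⨆ i, t i)) * ENNReal.ofReal (Real.exp (-(gapER j t))) =
      ENNReal.ofReal (eexp (t j)) := by
  rw [eexp_ne_bot (sup_ne_bot' htj), eexp_ne_bot htj,
    ← ENNReal.ofReal_mul (Real.exp_nonneg _), ← Real.exp_add]
  unfold gapER
  congr 2
  ring

lemma ae_map_ne_top {d : ℕ} {Ω : Type*} [MeasurableSpace Ω] (P : Measure Ω)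
    (f : Ω → Fin d → EReal) (hf : Measurable f) (h : ∀ ω i, f ω i ≠ ⊤) :
    ∀ᵐ t ∂(Measure.map f P), ∀ i, t i ≠ ⊤ := by
  rw [ae_iff]
  have hset : MeasurableSet {t : Fin d → EReal | ¬ ∀ i, t i ≠ ⊤} := by
    have he : {t : Fin d → EReal | ¬ ∀ i, t i ≠ ⊤} = ⋃ i, {t | t i = ⊤} := by
      ext t; push_neg; simp
    rw [he]
    exact MeasurableSet.iUnion fun i => (measurable_pi_apply i) (measurableSet_singleton ⊤)
  rw [Measure.map_apply hf hset]
  have : f ⁻¹' {t : Fin d → EReal | ¬ ∀ i, t i ≠ ⊤} = ∅ := by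
    ext ω; simp [h ω _]
  rw [this]; exact measure_empty

end AuxLemmas

/-- Proposition 5.2: if `Q^{(j)}` has `ν`-density `t ↦ e^{t_j} f_U(t)`, then
`exp(Q^{(j)} - Q^{(j)}_j)` has the conditional law of `exp(Y - Y_j)` given `Y_j > 0`. -/
theorem extremal_function_representation {d : ℕ} [NeZero d]
    {Ω : Type*} [MeasurableSpace Ω] (P : Measure Ω) [IsProbabilityMeasure P]
    -- the U-generator with density f_U with respect to ν
    (U : Ω → Fin d → EReal) (hUmeas : Measurable U)
    (hUtop : ∀ ω j, U ω j ≠ ⊤)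
    (fU : (Fin d → EReal) → ℝ)
    (hUdens : Measure.map U P = (nuMeasure d).withDensity fun u => ENNReal.ofReal (fU u))
    (hUnorm : ∀ j, ∫ ω, eexp (U ω j) ∂P = 1)
    (hUmax_pos : 0 < ∫ ω, eexp (⨆ j, U ω j) ∂P)
    (hUmax_int : Integrable (fun ω => eexp (⨆ j, U ω j)) P)
    -- the associated T-generator
    (T : Ω → Fin d → EReal) (hTmeas : Measurable T)
    (hTtop : ∀ ω j, T ω j ≠ ⊤)
    (hTU : ∀ B : Set (Fin d → EReal), MeasurableSet B →
      (P {ω | T ω ∈ B}).toReal =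
        (∫ ω, (if U ω ∈ B then eexp (⨆ j, U ω j) else 0) ∂P) /
          ∫ ω, eexp (⨆ j, U ω j) ∂P)
    -- a unit exponential random variable independent of T
    (Eexp : Ω → ℝ) (hEmeas : Measurable Eexp)
    (hElaw : Measure.map Eexp P = expMeasure 1)
    (hindep : IndepFun Eexp T P)
    -- the associated mgp random vector Y = T - max T + E
    (Y : Ω → Fin d → EReal)
    (hY : ∀ ω j, Y ω j = T ω j - (⨆ i, T ω i) + (Eexp ω : EReal))
    -- the index j and the random vector Q^{(j)}
    (j : Fin d)
    {Ω'' : Type*} [MeasurableSpace Ω''] (P'' : Measure Ω'') [IsProbabilityMeasure P'']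
    (Q : Ω'' → Fin d → EReal) (hQmeas : Measurable Q)
    (hQdens : Measure.map Q P'' =
      (nuMeasure d).withDensity fun t => ENNReal.ofReal (eexp (t j) * fU t)) :
    0 < P {ω | 0 < Y ω j} ∧
    Measure.map (fun ω'' => fun i => eexp (Q ω'' i) / eexp (Q ω'' j)) P'' =
      Measure.map (fun ω => fun i => eexp (Y ω i) / eexp (Y ω j))
        (ProbabilityTheory.cond P {ω | 0 < Y ω j}) := by
  -- basic objects
  set c : ℝ := ∫ ω, eexp (⨆ j, U ω j) ∂P with hc
  set cE : ℝ≥0∞ := ENNReal.ofReal c with hcE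
  have hcE0 : cE ≠ 0 := (ENNReal.ofReal_pos.mpr hUmax_pos).ne'
  have hcEtop : cE ≠ ⊤ := ENNReal.ofReal_ne_top
  set μU : Measure (Fin d → EReal) := Measure.map U P with hμU
  set μT : Measure (Fin d → EReal) := Measure.map T P with hμTdef
  haveI hPU : IsProbabilityMeasure μU := Measure.isProbabilityMeasure_map hUmeas.aemeasurable
  haveI hPT : IsProbabilityMeasure μT := Measure.isProbabilityMeasure_map hTmeas.aemeasurable
  set eE : (Fin d → EReal) → ℝ≥0∞ := fun t => ENNReal.ofReal (eexp (t j)) with heE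
  have heEmeas : Measurable eE :=
    ENNReal.measurable_ofReal.comp (measurable_eexp.comp (measurable_pi_apply j))
  set esup : (Fin d → EReal) → ℝ≥0∞ := fun t => ENNReal.ofReal (eexp (⨆ i, t i)) with hesup
  have hesupmeas : Measurable esup :=
    ENNReal.measurable_ofReal.comp (measurable_eexp.comp
      (Measurable.iSup fun i => measurable_pi_apply i))
  set hfn : (Fin d → EReal) → (Fin d → ℝ) := fun t => fun i => eexp (t i) / eexp (t j)
    with hhfn
  have hhmeas : Measurable hfn := measurable_pi_lambda _ fun i =>
    (measurable_eexp.comp (measurable_pi_apply i)).div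
      (measurable_eexp.comp (measurable_pi_apply j))
  have hgapmeas : Measurable (gapER j : (Fin d → EReal) → ℝ) := by
    unfold gapER
    exact (measurable_ereal_toReal.comp (Measurable.iSup fun i => measurable_pi_apply i)).sub
      (measurable_ereal_toReal.comp (measurable_pi_apply j))
  have hUae : ∀ᵐ t ∂μU, ∀ i, t i ≠ ⊤ := ae_map_ne_top P U hUmeas hUtop
  have hTae : ∀ᵐ t ∂μT, ∀ i, t i ≠ ⊤ := ae_map_ne_top P T hTmeas hTtop
  -- Step A : ∫⁻ eE dμU = 1
  have hsupU_ne_top : ∀ ω, (⨆ i, U ω i) ≠ ⊤ := fun ω => sup_ne_top' (hUtop ω)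
  have hInt_j : Integrable (fun ω => eexp (U ω j)) P := by
    refine hUmax_int.mono ?_ (ae_of_all _ fun ω => ?_)
    · exact (measurable_eexp.comp ((measurable_pi_apply j).comp hUmeas)).aestronglyMeasurable
    · rw [Real.norm_eq_abs, Real.norm_eq_abs, abs_of_nonneg (eexp_nonneg _),
        abs_of_nonneg (eexp_nonneg _)]
      exact eexp_le (le_iSup _ j) (hsupU_ne_top ω)
  have hA : ∫⁻ ω, eE (U ω) ∂P = 1 := by
    rw [heE]
    rw [← ofReal_integral_eq_lintegral_ofReal hInt_j (ae_of_all _ fun ω => eexp_nonneg _),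
      hUnorm j, ENNReal.ofReal_one]
  have hA' : ∫⁻ t, eE t ∂μU = 1 := by
    rw [hμU, lintegral_map heEmeas hUmeas]; exact hA
  -- Step B : density of μT with respect to μU
  have hμT : μT = cE⁻¹ • (μU.withDensity esup) := by
    ext B hB
    have hmeas_ite : Measurable (fun ω => if U ω ∈ B then eexp (⨆ i, U ω i) else 0) := by
      refine Measurable.ite (hUmeas hB) ?_ measurable_const
      exact measurable_eexp.comp (Measurable.iSup fun i => (measurable_pi_apply i).comp hUmeas)
    have hIint : Integrable (fun ω => if U ω ∈ B then eexp (⨆ i, U ω i) else 0) P := by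
      refine hUmax_int.mono hmeas_ite.aestronglyMeasurable (ae_of_all _ fun ω => ?_)
      rw [Real.norm_eq_abs, Real.norm_eq_abs]
      split_ifs
      · exact le_refl _
      · simpa using abs_nonneg _ |>.trans (le_abs_self _)
    have hnn : 0 ≤ᵐ[P] fun ω => if U ω ∈ B then eexp (⨆ i, U ω i) else 0 := by
      refine ae_of_all _ fun ω => ?_
      simp only [Pi.zero_apply]
      split_ifs
      · exact eexp_nonneg _
      · exact le_refl 0
    have h1 := hTU B hB
    have h2 : P {ω | T ω ∈ B} =
        ENNReal.ofReal ((∫ ω, (if U ω ∈ B then eexp (⨆ i, U ω i) else 0) ∂P) / c) := by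
      rw [← ENNReal.ofReal_toReal (measure_ne_top P {ω | T ω ∈ B}), h1]
    have h3 : ENNReal.ofReal (∫ ω, (if U ω ∈ B then eexp (⨆ i, U ω i) else 0) ∂P) =
        ∫⁻ t in B, esup t ∂μU := by
      rw [ofReal_integral_eq_lintegral_ofReal hIint hnn]
      have h4 : ∀ ω, ENNReal.ofReal (if U ω ∈ B then eexp (⨆ i, U ω i) else 0) =
          Set.indicator B esup (U ω) := by
        intro ω
        rw [Set.indicator_apply]
        split_ifs
        · rfl
        · exact ENNReal.ofReal_zero
      calc ∫⁻ ω, ENNReal.ofReal (if U ω ∈ B then eexp (⨆ i, U ω i) else 0) ∂P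
          = ∫⁻ ω, Set.indicator B esup (U ω) ∂P := by
            exact lintegral_congr fun ω => h4 ω
        _ = ∫⁻ t, Set.indicator B esup t ∂μU := by
            rw [hμU, lintegral_map (hesupmeas.indicator hB) hUmeas]
        _ = ∫⁻ t in B, esup t ∂μU := lintegral_indicator hB esup
    rw [hμTdef, Measure.map_apply hTmeas hB]
    have hTB : T ⁻¹' B = {ω | T ω ∈ B} := rfl
    rw [hTB, h2, ENNReal.ofReal_div_of_pos hUmax_pos, h3]
    rw [Measure.smul_apply, smul_eq_mul, withDensity_apply _ hB]
    rw [ENNReal.div_eq_inv_mul]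
  -- Step C : the key event computation
  have hstepC : ∀ C : Set (Fin d → EReal), MeasurableSet C →
      P {ω | T ω ∈ C ∧ T ω j ≠ ⊥ ∧ gapER j (T ω) < Eexp ω} =
        cE⁻¹ * ∫⁻ t in C, eE t ∂μU := by
    intro C hC
    set W : Set (ℝ × (Fin d → EReal)) :=
      {p | p.2 ∈ C ∧ p.2 j ≠ ⊥ ∧ gapER j p.2 < p.1} with hW
    have hWmeas : MeasurableSet W := by
      refine MeasurableSet.inter (measurable_snd hC) (MeasurableSet.inter ?_ ?_)
      · exact ((measurable_pi_apply j).comp measurable_snd (measurableSet_singleton ⊥)).compl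
      · exact measurableSet_lt (hgapmeas.comp measurable_snd) measurable_fst
    have hpair : Measurable fun ω => (Eexp ω, T ω) := hEmeas.prodMk hTmeas
    have hevent : {ω | T ω ∈ C ∧ T ω j ≠ ⊥ ∧ gapER j (T ω) < Eexp ω} =
        (fun ω => (Eexp ω, T ω)) ⁻¹' W := rfl
    have hprodlaw : Measure.map (fun ω => (Eexp ω, T ω)) P = (expMeasure 1).prod μT := by
      rw [(indepFun_iff_map_prod_eq_prod_map_map hEmeas.aemeasurable
        hTmeas.aemeasurable).mp hindep, hElaw]
    haveI hPexp : IsProbabilityMeasure (expMeasure 1) := isProbabilityMeasure_expMeasure one_pos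
    have hFmeas : Measurable (fun t : Fin d → EReal =>
        if t ∈ C ∧ t j ≠ ⊥ then ENNReal.ofReal (Real.exp (-(gapER j t))) else 0) := by
      refine Measurable.ite ?_ ?_ measurable_const
      · exact hC.inter ((measurable_pi_apply j) (measurableSet_singleton ⊥)).compl
      · exact ENNReal.measurable_ofReal.comp (Real.measurable_exp.comp hgapmeas.neg)
    calc P {ω | T ω ∈ C ∧ T ω j ≠ ⊥ ∧ gapER j (T ω) < Eexp ω}
        = Measure.map (fun ω => (Eexp ω, T ω)) P W := by
          rw [hevent, Measure.map_apply hpair hWmeas]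
      _ = (expMeasure 1).prod μT W := by rw [hprodlaw]
      _ = ∫⁻ t, expMeasure 1 ((fun e => (e, t)) ⁻¹' W) ∂μT :=
          Measure.prod_apply_symm hWmeas
      _ = ∫⁻ t, (if t ∈ C ∧ t j ≠ ⊥ then ENNReal.ofReal (Real.exp (-(gapER j t))) else 0) ∂μT := by
          refine lintegral_congr_ae ?_
          filter_upwards [hTae] with t ht
          have hpre : ((fun e => (e, t)) ⁻¹' W) =
              (if t ∈ C ∧ t j ≠ ⊥ then Set.Ioi (gapER j t) else (∅ : Set ℝ)) := by
            split_ifs with h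
            · ext e
              simp only [Set.mem_preimage, hW, Set.mem_setOf_eq, Set.mem_Ioi, h.1, h.2,
                ne_eq, not_false_eq_true, true_and]
            · ext e
              simp only [Set.mem_preimage, hW, Set.mem_setOf_eq, Set.mem_empty_iff_false,
                iff_false]
              tauto
          rw [hpre]
          split_ifs with h
          · exact expMeasure_Ioi (gap_nonneg ht h.2)
          · exact measure_empty
      _ = cE⁻¹ * ∫⁻ t in C, eE t ∂μU := by
          rw [hμT, lintegral_smul_measure]
          congr 1
          rw [lintegral_withDensity_eq_lintegral_mul μU hesupmeas hFmeas]
          rw [← lintegral_indicator hC eE]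
          refine lintegral_congr_ae ?_
          filter_upwards [hUae] with t ht
          simp only [Pi.mul_apply]
          by_cases htC : t ∈ C
          · rw [Set.indicator_of_mem htC]
            by_cases htj : t j = ⊥
            · rw [if_neg (by tauto), mul_zero, heE]
              simp [htj, eexp_bot]
            · rw [if_pos ⟨htC, htj⟩, hesup, heE]
              exact esup_mul_exp_neg_gap ht htj
          · rw [Set.indicator_of_notMem htC, if_neg (by tauto), mul_zero]
  -- Step D : the conditioning event
  have hs_eq : {ω | 0 < Y ω j} =
      {ω | T ω ∈ (Set.univ : Set (Fin d → EReal)) ∧ T ω j ≠ ⊥ ∧ gapER j (T ω) < Eexp ω} := by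
    ext ω
    simp only [Set.mem_setOf_eq, Set.mem_univ, true_and]
    rw [hY ω j]
    exact pos_sub_sup_add_iff (hTtop ω) (Eexp ω)
  have hPs : P {ω | T ω ∈ (Set.univ : Set (Fin d → EReal)) ∧ T ω j ≠ ⊥ ∧
      gapER j (T ω) < Eexp ω} = cE⁻¹ := by
    rw [hstepC Set.univ MeasurableSet.univ, Measure.restrict_univ, hA', mul_one]
  have hsmeas : MeasurableSet {ω | T ω ∈ (Set.univ : Set (Fin d → EReal)) ∧ T ω j ≠ ⊥ ∧
      gapER j (T ω) < Eexp ω} := by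
    refine MeasurableSet.inter (hTmeas MeasurableSet.univ) (MeasurableSet.inter ?_ ?_)
    · exact (((measurable_pi_apply j).comp hTmeas) (measurableSet_singleton ⊥)).compl
    · exact measurableSet_lt (hgapmeas.comp hTmeas) hEmeas
  rw [hs_eq]
  constructor
  · rw [hPs]
    simp only [ENNReal.inv_pos]
    exact hcEtop
  -- Step E : the main identity
  refine Measure.ext fun A hA2 => ?_
  -- LHS
  have hLHS : Measure.map (fun ω'' => fun i => eexp (Q ω'' i) / eexp (Q ω'' j)) P'' A =
      ∫⁻ t in hfn ⁻¹' A, eE t ∂μU := by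
    have hcomp : (fun ω'' => fun i => eexp (Q ω'' i) / eexp (Q ω'' j)) = hfn ∘ Q := rfl
    rw [hcomp, ← Measure.map_map hhmeas hQmeas, hQdens]
    have hdens_eq : (fun t => ENNReal.ofReal (eexp (t j) * fU t)) =
        fun t => eE t * ENNReal.ofReal (fU t) := by
      funext t
      rw [heE, ENNReal.ofReal_mul (eexp_nonneg _)]
    rw [hdens_eq]
    haveI : IsFiniteMeasure ((nuMeasure d).withDensity fun u => ENNReal.ofReal (fU u)) := by
      have h := hPU
      rw [hUdens] at h
      infer_instance
    rw [withDensity_mul_of_measurable (nuMeasure d) (fun u => ENNReal.ofReal (fU u)) heEmeas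
      (fun t => ENNReal.ofReal_ne_top)]
    rw [← hUdens, Measure.map_apply hhmeas hA2, withDensity_apply _ (hhmeas hA2)]
  rw [hLHS]
  -- RHS
  have hae : (fun ω => fun i => eexp (Y ω i) / eexp (Y ω j)) =ᵐ[ProbabilityTheory.cond P
      {ω | T ω ∈ (Set.univ : Set (Fin d → EReal)) ∧ T ω j ≠ ⊥ ∧ gapER j (T ω) < Eexp ω}]
      (hfn ∘ T) := by
    have h1 : ∀ᵐ ω ∂(ProbabilityTheory.cond P {ω | T ω ∈ (Set.univ : Set (Fin d → EReal)) ∧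
        T ω j ≠ ⊥ ∧ gapER j (T ω) < Eexp ω}), ω ∈ {ω | T ω ∈ (Set.univ : Set (Fin d → EReal)) ∧
        T ω j ≠ ⊥ ∧ gapER j (T ω) < Eexp ω} := by
      rw [ProbabilityTheory.cond]
      exact Measure.ae_smul_measure (self_mem_ae_restrict hsmeas) _
    filter_upwards [h1] with ω hω
    obtain ⟨-, htj, -⟩ := hω
    funext i
    show eexp (Y ω i) / eexp (Y ω j) = eexp (T ω i) / eexp (T ω j)
    rw [hY ω i, hY ω j]
    exact eexp_div_eq (hTtop ω) htj (Eexp ω) i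
  rw [Measure.map_congr hae, Measure.map_apply (hhmeas.comp hTmeas) hA2,
    ProbabilityTheory.cond_apply hsmeas, hPs]
  have hinter : {ω | T ω ∈ (Set.univ : Set (Fin d → EReal)) ∧ T ω j ≠ ⊥ ∧
      gapER j (T ω) < Eexp ω} ∩ (hfn ∘ T) ⁻¹' A =
      {ω | T ω ∈ hfn ⁻¹' A ∧ T ω j ≠ ⊥ ∧ gapER j (T ω) < Eexp ω} := by
    ext ω
    simp only [Set.mem_inter_iff, Set.mem_setOf_eq, Set.mem_preimage, Set.mem_univ,
      true_and, Function.comp_apply]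
    tauto
  rw [hinter, hstepC (hfn ⁻¹' A) (hhmeas hA2)]
  rw [inv_inv, ← mul_assoc, ENNReal.mul_inv_cancel hcE0 hcEtop, one_mul]
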